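/- arXiv:2010.06551 — 8 statements merged into one kernel-verified Lean document; each statement's English description precedes it below -/
import Mathlib

section
/- Let E be a real normed vector space, let U ⊆ E be a convex set, and let f : U → ℝ be any function. Then the Lipschitz constant of f on U equals the supremum of the local Lipschitz constants: L_f(U) = sup_{x ∈ U} L_f(x), as elements of [0,∞]. -/
/-!
A function that is `C`-Lipschitz near every point of a convex set is `C`-Lipschitz on it: for the
segment `γ t = x + t • (y - x)`, the function `t ↦ dist (f (γ t)) (f x)` has right Dini derivative
at most `C ‖y - x‖`, so it is bounded by `C ‖y - x‖ t`. Applying this with any `C` above every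
local Lipschitz constant gives `L_f(U) ≤ sup_x L_f(x)`; the reverse inequality is monotonicity of `lipConstOn`.
-/

open Metric

/-- The Lipschitz constant of `f` on a set `K`, valued in `[0,∞]`. -/
noncomputable def lipConstOn {X Y : Type*} [MetricSpace X] [MetricSpace Y]
    (f : X → Y) (K : Set X) : ENNReal :=
  sInf { L : ENNReal | ∀ x ∈ K, ∀ y ∈ K, edist (f x) (f y) ≤ L * edist x y }

/-- The local Lipschitz constant at `x` of a map `f` defined on the domain `D`:
the limit (infimum) as `r → 0` of the Lipschitz constants of `f` on `B(x,r) ∩ D`. -/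
noncomputable def locLipConstOn {X Y : Type*} [MetricSpace X] [MetricSpace Y]
    (f : X → Y) (D : Set X) (x : X) : ENNReal :=
  ⨅ (r : ℝ) (_ : 0 < r), lipConstOn f (ball x r ∩ D)

open Set Filter Topology NNReal

theorem dist_le_mul_of_forall_exists_lipschitzOnWith_Icc {F : Type*} [PseudoMetricSpace F]
    {g : ℝ → F} {a b : ℝ} {C : ℝ≥0} (hab : a ≤ b)
    (h : ∀ t ∈ Icc a b, ∃ s ∈ 𝓝[Icc a b] t, LipschitzOnWith C g s) :
    dist (g b) (g a) ≤ C * (b - a) := by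
  refine image_le_of_liminf_slope_right_le_deriv_boundary (f := fun t => dist (g t) (g a))
    (B := fun t => C * (t - a)) (B' := fun _ => (C : ℝ)) ?_ (by simp) (by fun_prop) ?_ ?_
    ⟨hab, le_rfl⟩
  · intro t ht
    obtain ⟨s, hs, hlip⟩ := h t ht
    exact ((hlip.continuousOn _ (mem_of_mem_nhdsWithin ht hs)).mono_of_mem_nhdsWithin hs).dist
      continuousWithinAt_const
  · intro t _
    simpa using (((hasDerivAt_id t).sub_const a).const_mul (C : ℝ)).hasDerivWithinAt
  · intro t ht r hr
    obtain ⟨s, hs, hlip⟩ := h t (Ico_subset_Icc_self ht)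
    have hts : t ∈ s := mem_of_mem_nhdsWithin (Ico_subset_Icc_self ht) hs
    have hs' : s ∈ 𝓝[>] t := nhdsWithin_le_of_mem (Icc_mem_nhdsGT_of_mem ht) hs
    refine (Filter.eventually_of_mem (inter_mem hs' self_mem_nhdsWithin) ?_).frequently
    rintro z ⟨hzs, htz : t < z⟩
    have hzt : 0 < z - t := sub_pos.2 htz
    calc slope (fun t => dist (g t) (g a)) t z
        = (dist (g z) (g a) - dist (g t) (g a)) / (z - t) := slope_def_field _ _ _
      _ ≤ dist (g z) (g t) / (z - t) := by
          gcongr; linarith [dist_triangle (g z) (g t) (g a)]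
      _ ≤ C * (z - t) / (z - t) := by
          gcongr; simpa [Real.dist_eq, abs_of_pos hzt] using hlip.dist_le_mul z hzs t hts
      _ = C := mul_div_cancel_right₀ _ hzt.ne'
      _ < r := hr

theorem Convex.lipschitzOnWith_of_forall_exists_lipschitzOnWith {E F : Type*}
    [SeminormedAddCommGroup E] [NormedSpace ℝ E] [PseudoMetricSpace F] {U : Set E}
    (hU : Convex ℝ U) {f : E → F} {C : ℝ≥0}
    (h : ∀ x ∈ U, ∃ s ∈ 𝓝[U] x, LipschitzOnWith C f s) : LipschitzOnWith C f U := by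
  refine LipschitzOnWith.of_dist_le_mul fun x hx y hy => ?_
  set γ := AffineMap.lineMap (k := ℝ) y x
  have hγ : LipschitzWith (nndist y x) γ := lipschitzWith_lineMap y x
  have hγU : MapsTo γ (Icc 0 1) U := fun t ht => hU.lineMap_mem hy hx ht
  have key := dist_le_mul_of_forall_exists_lipschitzOnWith_Icc (g := f ∘ γ) zero_le_one
    fun t ht => by
      obtain ⟨s, hs, hlip⟩ := h (γ t) (hγU ht)
      exact ⟨γ ⁻¹' s, hγ.continuous.continuousWithinAt.tendsto_nhdsWithin hγU hs,
        hlip.comp hγ.lipschitzOnWith (mapsTo_preimage γ s)⟩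
  simpa [γ, dist_comm y x] using key

section LipConst

variable {X Y : Type*} [MetricSpace X] [MetricSpace Y] {f : X → Y}

theorem lipConstOn_le_of_lipschitzOnWith {K : Set X} {C : ℝ≥0} (h : LipschitzOnWith C f K) :
    lipConstOn f K ≤ C :=
  sInf_le fun _ hx _ hy => h hx hy

theorem lipschitzOnWith_of_lipConstOn_lt {K : Set X} {C : ℝ≥0} (h : lipConstOn f K < C) :
    LipschitzOnWith C f K := by
  obtain ⟨L, hL, hLC⟩ := sInf_lt_iff.1 h
  exact fun x hx y hy => (hL x hx y hy).trans (mul_le_mul_left hLC.le _)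

theorem lipConstOn_mono {K K' : Set X} (h : K ⊆ K') : lipConstOn f K ≤ lipConstOn f K' :=
  sInf_le_sInf fun _ hL x hx y hy => hL x (h hx) y (h hy)

theorem locLipConstOn_le_lipConstOn (D : Set X) (x : X) :
    locLipConstOn f D x ≤ lipConstOn f D :=
  (iInf₂_le 1 one_pos).trans (lipConstOn_mono inter_subset_right)

theorem exists_lipschitzOnWith_of_locLipConstOn_lt {D : Set X} {x : X} {C : ℝ≥0}
    (h : locLipConstOn f D x < C) : ∃ s ∈ 𝓝[D] x, LipschitzOnWith C f s := by
  obtain ⟨r, hr, hlt⟩ := by simpa only [locLipConstOn, iInf_lt_iff] using h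
  exact ⟨_, mem_nhdsWithin_iff_exists_mem_nhds_inter.2 ⟨_, ball_mem_nhds x hr, subset_rfl⟩,
    lipschitzOnWith_of_lipConstOn_lt hlt⟩

end LipConst

/-- for a convex subset `U` of a real normed vector space and any
function `f : U → ℝ`, the Lipschitz constant of `f` on `U` equals the supremum
over `x ∈ U` of the local Lipschitz constants, in `[0,∞]`. -/
theorem lipConstOn_eq_iSup_locLipConst {E : Type*} [NormedAddCommGroup E]
    [NormedSpace ℝ E] (U : Set E) (hU : Convex ℝ U) (f : E → ℝ) :
    lipConstOn f U = ⨆ x ∈ U, locLipConstOn f U x := by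
  refine le_antisymm (le_of_forall_gt fun c hc => ?_)
    (iSup₂_le fun x _ => locLipConstOn_le_lipConstOn U x)
  obtain ⟨C, hMC, hCc⟩ := ENNReal.lt_iff_exists_nnreal_btwn.1 hc
  have hloc : ∀ x ∈ U, ∃ s ∈ 𝓝[U] x, LipschitzOnWith C f s := fun x hx =>
    exists_lipschitzOnWith_of_locLipConstOn_lt ((le_biSup _ hx).trans_lt hMC)
  exact (lipConstOn_le_of_lipschitzOnWith
    (hU.lipschitzOnWith_of_forall_exists_lipschitzOnWith hloc)).trans_lt hCc
end

section
/- Let p > 2 be a real number and let e_p, e be real numbers with 0 ≤ e_p ≤ e ≤ 1. Then e_p^{p−2} (e² − e_p²) < 2/(p−2). -/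
/-! Write `q = p - 2`. Since `e² - e_p² ≤ 2 (1 - e_p)`, it suffices that `x ^ q (1 - x) < 1 / q`
for `x ≥ 0`. With `t = -q log x` one has `x ^ q = exp (-t)` and `1 - x ≤ -log x = t / q`,
so `q x ^ q (1 - x) ≤ t exp (-t) < 1` because `t < exp t`. -/

open Real

lemma Real.mul_exp_neg_lt_one (t : ℝ) : t * exp (-t) < 1 := by
  calc t * exp (-t) < exp t * exp (-t) := by
        gcongr
        linarith [add_one_le_exp t]
    _ = 1 := by rw [← exp_add, add_neg_cancel, exp_zero]

lemma Real.rpow_mul_one_sub_lt_inv {q x : ℝ} (hq : 0 < q) (hx : 0 ≤ x) :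
    x ^ q * (1 - x) < q⁻¹ := by
  rcases hx.eq_or_lt with rfl | hx
  · rw [zero_rpow hq.ne', zero_mul]
    positivity
  have hpow : x ^ q = exp (-(-log x * q)) := by
    rw [rpow_def_of_pos hx, neg_mul, neg_neg]
  have hsub : 1 - x ≤ -log x * q * q⁻¹ := by
    rw [mul_inv_cancel_right₀ hq.ne']
    linarith [log_le_sub_one_of_pos hx]
  calc x ^ q * (1 - x) ≤ exp (-(-log x * q)) * (-log x * q * q⁻¹) := by
        rw [hpow]
        gcongr
    _ = (-log x * q) * exp (-(-log x * q)) * q⁻¹ := by ring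
    _ < 1 * q⁻¹ := by
        gcongr
        exact mul_exp_neg_lt_one _
    _ = q⁻¹ := one_mul _

lemma sq_sub_sq_le_two_mul_one_sub {a b : ℝ} (hab : a ≤ b) (hb : b ≤ 1) :
    b ^ 2 - a ^ 2 ≤ 2 * (1 - a) := by
  nlinarith

/-- Lemma 5.6 of the paper: if `p > 2` and `0 ≤ e_p ≤ e ≤ 1`,
then `e_p ^ (p - 2) * (e ^ 2 - e_p ^ 2) < 2 / (p - 2)` (real powers). -/
theorem rpow_concentration_ineq (p ep e : ℝ) (hp : 2 < p)
    (h0 : 0 ≤ ep) (h1 : ep ≤ e) (h2 : e ≤ 1) :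
    ep ^ (p - 2) * (e ^ 2 - ep ^ 2) < 2 / (p - 2) := by
  have hq : 0 < p - 2 := sub_pos.mpr hp
  calc ep ^ (p - 2) * (e ^ 2 - ep ^ 2) ≤ ep ^ (p - 2) * (2 * (1 - ep)) := by
        gcongr
        exact sq_sub_sq_le_two_mul_one_sub h1 h2
    _ = 2 * (ep ^ (p - 2) * (1 - ep)) := by ring
    _ < 2 * (p - 2)⁻¹ := by
        gcongr
        exact rpow_mul_one_sub_lt_inv hq h0
    _ = 2 / (p - 2) := (div_eq_mul_inv _ _).symm
end

section
/- Let p, q be real numbers with 1 < q ≤ 2 ≤ p and 1/p + 1/q = 1. Let V ∈ ℂ with V ≠ 0 and set W = ‖V‖^{p−2} · (i·V) (real scalar multiplication by the real power ‖V‖^{p−2}, followed by multiplication by the imaginary unit i). Then ‖W‖^{q−2} · (i·W) = −V. -/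
open Complex

/-- For `s = p - 2` this is the map `du ↦ |du|^(p-2) * du` followed by the Hodge star, which on
1-forms of a surface, identified with `ℂ`, is multiplication by `i`. -/
noncomputable def hodgeDual (s : ℝ) (z : ℂ) : ℂ := ‖z‖ ^ s • (I * z)

lemma norm_hodgeDual (s : ℝ) {z : ℂ} (hz : z ≠ 0) : ‖hodgeDual s z‖ = ‖z‖ ^ (s + 1) := by
  rw [hodgeDual, norm_smul, norm_mul, norm_I, one_mul, Real.norm_of_nonneg (by positivity),
    Real.rpow_add_one (norm_ne_zero_iff.2 hz)]

lemma hodgeDual_hodgeDual {s t : ℝ} (hst : (s + 1) * (t + 1) = 1) (z : ℂ) :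
    hodgeDual t (hodgeDual s z) = -z := by
  rcases eq_or_ne z 0 with rfl | hz
  · simp [hodgeDual]
  have hr : 0 < ‖z‖ := norm_pos_iff.2 hz
  calc hodgeDual t (hodgeDual s z) = (‖z‖ ^ ((s + 1) * t) * ‖z‖ ^ s) • (I * I * z) := by
        rw [hodgeDual, norm_hodgeDual s hz, ← Real.rpow_mul hr.le, hodgeDual, mul_smul,
          mul_smul_comm, mul_assoc]
    _ = ‖z‖ ^ ((s + 1) * (t + 1) - 1) • -z := by
        rw [← Real.rpow_add hr, I_mul_I, neg_one_mul]
        ring_nf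
    _ = -z := by rw [hst, sub_self, Real.rpow_zero, one_smul]

theorem conjugate_hodge_duality_general (p q : ℝ) (hp : 2 ≤ p)
    (hpq : 1 / p + 1 / q = 1) (V : ℂ) :
    ‖(‖V‖ ^ (p - 2) : ℝ) • (Complex.I * V)‖ ^ (q - 2) •
        (Complex.I * ((‖V‖ ^ (p - 2) : ℝ) • (Complex.I * V))) = -V := by
  have hconj : p.HolderConjugate q :=
    Real.holderConjugate_iff.2 ⟨by linarith, by simpa only [one_div] using hpq⟩
  have hexp : (p - 2 + 1) * (q - 2 + 1) = 1 := by linear_combination hconj.mul_eq_add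
  exact hodgeDual_hodgeDual hexp V

/-- pointwise duality, Lemma 3.2 of the paper: for conjugate
exponents `1 < q ≤ 2 ≤ p` with `1/p + 1/q = 1`, and `V ∈ ℂ` nonzero, setting
`W = ‖V‖^(p-2) • (i V)` (Hodge star = multiplication by `i`), one has
`‖W‖^(q-2) • (i W) = -V`. Powers of norms are real powers. -/
theorem conjugate_hodge_duality (p q : ℝ) (hq : 1 < q) (hq2 : q ≤ 2) (hp : 2 ≤ p)
    (hpq : 1 / p + 1 / q = 1) (V : ℂ) (hV : V ≠ 0) :
    ‖(‖V‖ ^ (p - 2) : ℝ) • (Complex.I * V)‖ ^ (q - 2) •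
        (Complex.I * ((‖V‖ ^ (p - 2) : ℝ) • (Complex.I * V))) = -V :=
  conjugate_hodge_duality_general p q hp hpq V
end

section
/- Let α be a real number with 0 < α < 1 and let T > 0. Then for every t with 0 < t ≤ T, (T/\sinh T)^α · t^{1−α}/(1−α) ≤ ∫_0^t (\sinh s)^{−α} ds ≤ t^{1−α}/(1−α). -/
/-!
Since `sinh` is convex on `[0, ∞)` and vanishes at `0`, its secant slope `sinh s / s` increases in
`s`, so `s ≤ sinh s ≤ s · sinh T / T` on `(0, T]`. Raising to the power `-α` reverses these
inequalities, and integrating `s ^ (-α)` from `0` to `t` gives `t ^ (1 - α) / (1 - α)`.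
-/

open Real Set MeasureTheory intervalIntegral

lemma convexOn_sinh_Ici : ConvexOn ℝ (Ici 0) sinh :=
  MonotoneOn.convexOn_of_deriv (convex_Ici 0) continuous_sinh.continuousOn
    differentiable_sinh.differentiableOn <| by
      rw [Real.deriv_sinh]
      intro x hx y hy hxy
      rw [interior_Ici] at hx hy
      exact cosh_le_cosh.2 (by rwa [abs_of_pos hx, abs_of_pos hy])

lemma sinh_div_self_le {s T : ℝ} (hs : 0 < s) (hsT : s ≤ T) : sinh s / s ≤ sinh T / T := by
  simpa using convexOn_sinh_Ici.secant_mono (a := 0) self_mem_Ici hs.le (hs.le.trans hsT)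
    hs.ne' (hs.trans_le hsT).ne' hsT

section RpowNeg

variable {α : ℝ}

lemma sinh_rpow_neg_le_rpow_neg (hα : 0 ≤ α) {s : ℝ} (hs : 0 < s) : sinh s ^ (-α) ≤ s ^ (-α) :=
  rpow_le_rpow_of_nonpos hs (self_le_sinh_iff.2 hs.le) (neg_nonpos.2 hα)

lemma div_sinh_rpow_mul_rpow_neg_le_sinh_rpow_neg (hα : 0 ≤ α) {s T : ℝ} (hs : 0 < s)
    (hsT : s ≤ T) : (T / sinh T) ^ α * s ^ (-α) ≤ sinh s ^ (-α) := by
  have hT : 0 < T := hs.trans_le hsT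
  have hsinh_le : sinh s ≤ s * (sinh T / T) := by
    have := sinh_div_self_le hs hsT
    rwa [div_le_iff₀ hs, mul_comm] at this
  calc (T / sinh T) ^ α * s ^ (-α)
      = (s * (sinh T / T)) ^ (-α) := by
        rw [mul_rpow hs.le (by positivity), ← inv_div, inv_rpow (by positivity),
          ← rpow_neg (by positivity), mul_comm]
    _ ≤ sinh s ^ (-α) := rpow_le_rpow_of_nonpos (sinh_pos_iff.2 hs) hsinh_le (neg_nonpos.2 hα)

lemma intervalIntegrable_sinh_rpow_neg (hα0 : 0 ≤ α) (hα1 : α < 1) {t : ℝ} (ht : 0 ≤ t) :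
    IntervalIntegrable (fun s ↦ sinh s ^ (-α)) volume 0 t := by
  refine (intervalIntegrable_rpow' (r := -α) (by linarith)).mono_fun
    (by fun_prop : Measurable fun s ↦ sinh s ^ (-α)).aestronglyMeasurable ?_
  filter_upwards [ae_restrict_mem measurableSet_uIoc] with s hs
  rw [uIoc_of_le ht] at hs
  rw [norm_of_nonneg (rpow_nonneg (sinh_nonneg_iff.2 hs.1.le) _),
    norm_of_nonneg (rpow_nonneg hs.1.le _)]
  exact sinh_rpow_neg_le_rpow_neg hα0 hs.1

lemma integral_rpow_neg_of_lt_one (hα : α < 1) (t : ℝ) :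
    ∫ s in (0 : ℝ)..t, s ^ (-α) = t ^ (1 - α) / (1 - α) := by
  rw [integral_rpow (Or.inl (by linarith)), zero_rpow (by linarith), sub_zero, neg_add_eq_sub]

end RpowNeg

theorem sinh_rpow_integral_estimate_general (α T : ℝ) (hα0 : 0 < α) (hα1 : α < 1)
    (t : ℝ) (ht0 : 0 < t) (htT : t ≤ T) :
    ((T / Real.sinh T) ^ α * t ^ (1 - α) / (1 - α) ≤
        ∫ s in (0 : ℝ)..t, Real.sinh s ^ (-α)) ∧
      (∫ s in (0 : ℝ)..t, Real.sinh s ^ (-α)) ≤ t ^ (1 - α) / (1 - α) := by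
  have hsinh := intervalIntegrable_sinh_rpow_neg hα0.le hα1 ht0.le
  have hpow : IntervalIntegrable (fun s : ℝ ↦ s ^ (-α)) volume 0 t :=
    intervalIntegrable_rpow' (by linarith)
  constructor
  · calc (T / sinh T) ^ α * t ^ (1 - α) / (1 - α)
        = ∫ s in (0 : ℝ)..t, (T / sinh T) ^ α * s ^ (-α) := by
          rw [intervalIntegral.integral_const_mul, integral_rpow_neg_of_lt_one hα1, mul_div_assoc]
      _ ≤ ∫ s in (0 : ℝ)..t, sinh s ^ (-α) :=
          integral_mono_on_of_le_Ioo ht0.le (hpow.const_mul _) hsinh fun s hs ↦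
            div_sinh_rpow_mul_rpow_neg_le_sinh_rpow_neg hα0.le hs.1 (hs.2.le.trans htT)
  · calc ∫ s in (0 : ℝ)..t, sinh s ^ (-α)
        ≤ ∫ s in (0 : ℝ)..t, s ^ (-α) :=
          integral_mono_on_of_le_Ioo ht0.le hsinh hpow fun s hs ↦
            sinh_rpow_neg_le_rpow_neg hα0.le hs.1
      _ = t ^ (1 - α) / (1 - α) := integral_rpow_neg_of_lt_one hα1 t

/-- estimate from Lemma 5.5 of the paper: for `0 < α < 1`,
`T > 0` and `0 < t ≤ T`,
`(T/sinh T)^α · t^(1-α)/(1-α) ≤ ∫_0^t (sinh s)^(-α) ds ≤ t^(1-α)/(1-α)`.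
Powers are real powers. -/
theorem sinh_rpow_integral_estimate (α T : ℝ) (hα0 : 0 < α) (hα1 : α < 1)
    (hT : 0 < T) (t : ℝ) (ht0 : 0 < t) (htT : t ≤ T) :
    ((T / Real.sinh T) ^ α * t ^ (1 - α) / (1 - α) ≤
        ∫ s in (0 : ℝ)..t, Real.sinh s ^ (-α)) ∧
      (∫ s in (0 : ℝ)..t, Real.sinh s ^ (-α)) ≤ t ^ (1 - α) / (1 - α) :=
  sinh_rpow_integral_estimate_general α T hα0 hα1 t ht0 htT
end

section
/- Let E be a real inner product space, let p > 2 be real, and let a, b ∈ E with ‖b‖ ≤ 1 and ‖b‖² ≥ ‖a‖² + ‖a − b‖². Then ‖a‖^{p−2} ‖a − b‖² < 2/(p−2). -/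
/-!
Put `x = ‖a‖`. The hypotheses give `‖a - b‖² ≤ ‖b‖² - x² ≤ 1 - x²`, so it suffices to bound
`x^q (1 - x²)` with `q = p - 2`. Two uses of `log y ≤ y - 1` do this: `1 - x^r ≤ -r log x`, and
with `s = x^q`, `-s log s ≤ 1 - s`; since `s log s = q x^q log x` these combine to
`x^q (1 - x^r) ≤ (r/q) (1 - x^q) < r/q`.
-/

open Real

lemma one_sub_rpow_le_neg_mul_log {x : ℝ} (hx : 0 < x) (r : ℝ) : 1 - x ^ r ≤ -(r * log x) := by
  have := log_le_sub_one_of_pos (rpow_pos_of_pos hx r)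
  rw [log_rpow hx] at this
  linarith

lemma rpow_mul_one_sub_rpow_le {q r x : ℝ} (hq : 0 < q) (hr : 0 ≤ r) (hx : 0 < x) :
    x ^ q * (1 - x ^ r) ≤ r / q * (1 - x ^ q) := by
  have hs : 0 ≤ x ^ q := (rpow_pos_of_pos hx q).le
  have hlog : x ^ q * log (x ^ q) = q * (x ^ q * log x) := by rw [log_rpow hx]; ring
  calc x ^ q * (1 - x ^ r) ≤ x ^ q * -(r * log x) :=
        mul_le_mul_of_nonneg_left (one_sub_rpow_le_neg_mul_log hx r) hs
    _ = r / q * -(x ^ q * log (x ^ q)) := by rw [hlog]; field_simp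
    _ ≤ r / q * (1 - x ^ q) := by
        gcongr
        linarith [self_sub_one_le_mul_log hs]

lemma rpow_mul_one_sub_rpow_lt {q r x : ℝ} (hq : 0 < q) (hr : 0 < r) (hx : 0 ≤ x) :
    x ^ q * (1 - x ^ r) < r / q := by
  rcases hx.eq_or_lt with rfl | hx
  · rw [zero_rpow hq.ne', zero_mul]
    positivity
  · calc x ^ q * (1 - x ^ r) ≤ r / q * (1 - x ^ q) := rpow_mul_one_sub_rpow_le hq hr.le hx
      _ < r / q := mul_lt_of_lt_one_right (by positivity) (by linarith [rpow_pos_of_pos hx q])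

theorem norm_rpow_concentration_general {E : Type*} [NormedAddCommGroup E] (p : ℝ) (hp : 2 < p) (a b : E)
    (hb : ‖b‖ ≤ 1) (h : ‖a‖ ^ 2 + ‖a - b‖ ^ 2 ≤ ‖b‖ ^ 2) :
    ‖a‖ ^ (p - 2) * ‖a - b‖ ^ 2 < 2 / (p - 2) := by
  have hb2 : ‖b‖ ^ 2 ≤ 1 := pow_le_one₀ (norm_nonneg b) hb
  have hd : ‖a - b‖ ^ 2 ≤ 1 - ‖a‖ ^ (2 : ℝ) := by rw [rpow_two]; linarith
  calc ‖a‖ ^ (p - 2) * ‖a - b‖ ^ 2 ≤ ‖a‖ ^ (p - 2) * (1 - ‖a‖ ^ (2 : ℝ)) :=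
        mul_le_mul_of_nonneg_left hd (rpow_nonneg (norm_nonneg a) _)
    _ < 2 / (p - 2) := rpow_mul_one_sub_rpow_lt (by linarith) two_pos (norm_nonneg a)

/-- pointwise estimate from Proposition 6.4 of the paper: in a
real inner product space, if `p > 2`, `‖b‖ ≤ 1` and
`‖b‖² ≥ ‖a‖² + ‖a − b‖²`, then `‖a‖^(p−2) ‖a − b‖² < 2/(p−2)`.
Powers of norms by `p − 2` are real powers. -/
theorem norm_rpow_concentration {E : Type*} [NormedAddCommGroup E]
    [InnerProductSpace ℝ E] (p : ℝ) (hp : 2 < p) (a b : E) (hb : ‖b‖ ≤ 1)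
    (h : ‖a‖ ^ 2 + ‖a - b‖ ^ 2 ≤ ‖b‖ ^ 2) :
    ‖a‖ ^ (p - 2) * ‖a - b‖ ^ 2 < 2 / (p - 2) :=
  norm_rpow_concentration_general p hp a b hb h
end

section
/- Let X be a metric space, x₀ ∈ X, R > 0, and let u : X → ℝ be continuous and bounded above on the closed ball of radius R about x₀. Assume the sphere S(x₀,r) = {x : dist(x,x₀) = r} is nonempty for every r ∈ (0,R], and that u satisfies comparison with cones from above on B(x₀,R): for every r ∈ (0,R] and all reals A, B, if u(x) ≤ A + B·dist(x,x₀) for every x with dist(x,x₀) = r and also u(x₀) ≤ A, then u(x) ≤ A + B·dist(x,x₀) for every x with dist(x,x₀) ≤ r. Then the function r ↦ (sup{ u(x) : dist(x,x₀) = r } − u(x₀))/r is monotone nondecreasing on (0,R]. -/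
open Metric Set

namespace Metric

variable {X : Type*} [PseudoMetricSpace X]

noncomputable def maxSlope (u : X → ℝ) (x₀ : X) (r : ℝ) : ℝ :=
  (sSup (u '' sphere x₀ r) - u x₀) / r

variable {u : X → ℝ} {x₀ : X} {r R B : ℝ}

theorem bddAbove_image_sphere_of_le (hbdd : BddAbove (u '' closedBall x₀ R)) (hr : r ≤ R) :
    BddAbove (u '' sphere x₀ r) :=
  hbdd.mono <| image_mono <| sphere_subset_closedBall.trans (closedBall_subset_closedBall hr)

theorem le_add_maxSlope_mul_dist (hr : 0 < r) (hbdd : BddAbove (u '' sphere x₀ r))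
    {x : X} (hx : dist x x₀ = r) : u x ≤ u x₀ + maxSlope u x₀ r * dist x x₀ := by
  have hle : u x ≤ sSup (u '' sphere x₀ r) := le_csSup hbdd ⟨x, hx, rfl⟩
  rw [hx, maxSlope, div_mul_cancel₀ _ hr.ne']
  linarith

theorem maxSlope_le_of_forall_sphere (hr : 0 < r) (hne : (sphere x₀ r).Nonempty)
    (h : ∀ x, dist x x₀ = r → u x ≤ u x₀ + B * r) : maxSlope u x₀ r ≤ B := by
  rw [maxSlope, div_le_iff₀ hr, sub_le_iff_le_add']
  exact csSup_le (hne.image u) (forall_mem_image.2 fun x hx ↦ h x hx)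

end Metric

theorem maxSlope_monotone_of_comparisonWithCones_general {X : Type*} [MetricSpace X]
    (x₀ : X) (R : ℝ) (u : X → ℝ)
    (hbdd : BddAbove (u '' closedBall x₀ R))
    (hsph : ∀ r ∈ Ioc (0 : ℝ) R, (sphere x₀ r).Nonempty)
    (hcone : ∀ r ∈ Ioc (0 : ℝ) R, ∀ A B : ℝ,
      (∀ x, dist x x₀ = r → u x ≤ A + B * dist x x₀) → u x₀ ≤ A →
        ∀ x, dist x x₀ ≤ r → u x ≤ A + B * dist x x₀) :
    MonotoneOn (fun r => (sSup (u '' sphere x₀ r) - u x₀) / r)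
      (Ioc (0 : ℝ) R) := by
  show MonotoneOn (maxSlope u x₀) _
  rintro r₁ hr₁ r₂ hr₂ h12
  have hcone₂ : ∀ x, dist x x₀ ≤ r₂ → u x ≤ u x₀ + maxSlope u x₀ r₂ * dist x x₀ :=
    hcone r₂ hr₂ _ _
      (fun _ ↦ le_add_maxSlope_mul_dist hr₂.1 (bddAbove_image_sphere_of_le hbdd hr₂.2))
      le_rfl
  refine maxSlope_le_of_forall_sphere hr₁.1 (hsph r₁ hr₁) fun x hx ↦ ?_
  simpa only [hx] using hcone₂ x (hx.trans_le h12)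

/-- Corollary 5.8 of the paper: if `u` is continuous, bounded
above on the closed ball `B(x₀,R)`, all spheres `S(x₀,r)`, `0 < r ≤ R`, are
nonempty, and `u` satisfies comparison with cones from above on `B(x₀,R)`,
then `r ↦ (sup_{S(x₀,r)} u − u(x₀))/r` is nondecreasing on `(0,R]`. -/
theorem maxSlope_monotone_of_comparisonWithCones {X : Type*} [MetricSpace X]
    (x₀ : X) (R : ℝ) (hR : 0 < R) (u : X → ℝ) (hu : Continuous u)
    (hbdd : BddAbove (u '' closedBall x₀ R))
    (hsph : ∀ r ∈ Ioc (0 : ℝ) R, (sphere x₀ r).Nonempty)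
    (hcone : ∀ r ∈ Ioc (0 : ℝ) R, ∀ A B : ℝ,
      (∀ x, dist x x₀ = r → u x ≤ A + B * dist x x₀) → u x₀ ≤ A →
        ∀ x, dist x x₀ ≤ r → u x ≤ A + B * dist x x₀) :
    MonotoneOn (fun r => (sSup (u '' sphere x₀ r) - u x₀) / r)
      (Ioc (0 : ℝ) R) :=
  maxSlope_monotone_of_comparisonWithCones_general x₀ R u hbdd hsph hcone
end

section
/- Let X be a proper metric space (closed balls are compact), x₀ ∈ X, R > 0, L > 0, and let u : X → ℝ satisfy |u(x) − u(y)| ≤ L·dist(x,y) for all x, y. Assume: (a) the sphere S(x₀,r) = {x : dist(x,x₀) = r} is nonempty for every r ∈ (0,R]; (b) u satisfies comparison with cones from above on B(x₀,R), i.e. for every r ∈ (0,R] and all reals A, B, if u(x) ≤ A + B·dist(x,x₀) for every x with dist(x,x₀) = r and u(x₀) ≤ A, then u(x) ≤ A + B·dist(x,x₀) for every x with dist(x,x₀) ≤ r; (c) there is a sequence x_i → x₀ with x_i ≠ x₀ and (u(x_i) − u(x₀))/dist(x_i,x₀) → L. Then for every r ∈ (0,R] there exists a point x with dist(x,x₀)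 = r and u(x) = u(x₀) + L·r. -/
/-!
Let `y` maximize `u` on the compact sphere `S(x₀, r)` and let `B` be the slope
`(u y - u x₀) / r`. The cone `u x₀ + B · dist(·, x₀)` dominates `u` on the sphere, hence on the
whole ball by comparison with cones, so every difference quotient of `u` at `x₀` from inside the
ball is at most `B`, and `L ≤ B` in the limit. The Lipschitz bound gives `B ≤ L`, so `B = L`.
-/

open Metric Set Filter

theorem Real.lipschitzWith_toNNReal_of_abs_sub_le {X : Type*} [PseudoMetricSpace X]
    {f : X → ℝ} {L : ℝ} (h : ∀ x y, |f x - f y| ≤ L * dist x y) :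
    LipschitzWith L.toNNReal f :=
  LipschitzWith.of_dist_le_mul fun x y => by
    rw [Real.dist_eq]
    exact (h x y).trans (mul_le_mul_of_nonneg_right (Real.le_coe_toNNReal L) dist_nonneg)

theorem exists_mem_sphere_forall_le_cone {X : Type*} [PseudoMetricSpace X] [ProperSpace X]
    {u : X → ℝ} (hu : Continuous u) {x₀ : X} {r : ℝ} (hr : r ≠ 0)
    (hsph : (sphere x₀ r).Nonempty) :
    ∃ y ∈ sphere x₀ r, ∀ z ∈ sphere x₀ r,
      u z ≤ u x₀ + (u y - u x₀) / r * dist z x₀ := by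
  obtain ⟨y, hy, hmax⟩ := (isCompact_sphere x₀ r).exists_isMaxOn hsph hu.continuousOn
  refine ⟨y, hy, fun z hz => ?_⟩
  rw [mem_sphere.mp hz, div_mul_cancel₀ _ hr]
  linarith [show u z ≤ u y from hmax hz]

theorem le_of_tendsto_slope_of_forall_le_cone {X : Type*} [MetricSpace X] {u : X → ℝ}
    {x₀ : X} {r B L : ℝ} (hr : 0 < r)
    (hcone : ∀ z, dist z x₀ ≤ r → u z ≤ u x₀ + B * dist z x₀)
    {x : ℕ → X} (hxne : ∀ i, x i ≠ x₀) (hx : Tendsto x atTop (nhds x₀))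
    (hslope : Tendsto (fun i => (u (x i) - u x₀) / dist (x i) x₀) atTop (nhds L)) :
    L ≤ B := by
  have hdist : Tendsto (fun i => dist (x i) x₀) atTop (nhds 0) :=
    tendsto_iff_dist_tendsto_zero.mp hx
  refine le_of_tendsto hslope ?_
  filter_upwards [hdist.eventually_le_const hr] with i hi
  rw [div_le_iff₀ (dist_pos.mpr (hxne i))]
  linarith [hcone (x i) hi]

theorem exists_cone_point_of_infinitesimal_stretch_general {X : Type*} [MetricSpace X]
    [ProperSpace X] (x₀ : X) (R L : ℝ) (u : X → ℝ)
    (hlip : ∀ x y : X, |u x - u y| ≤ L * dist x y)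
    (hsph : ∀ r ∈ Ioc (0 : ℝ) R, (sphere x₀ r).Nonempty)
    (hcone : ∀ r ∈ Ioc (0 : ℝ) R, ∀ A B : ℝ,
      (∀ x, dist x x₀ = r → u x ≤ A + B * dist x x₀) → u x₀ ≤ A →
        ∀ x, dist x x₀ ≤ r → u x ≤ A + B * dist x x₀)
    (x : ℕ → X) (hxne : ∀ i, x i ≠ x₀) (hx : Tendsto x atTop (nhds x₀))
    (hstretch : Tendsto (fun i => (u (x i) - u x₀) / dist (x i) x₀) atTop
      (nhds L)) :
    ∀ r ∈ Ioc (0 : ℝ) R, ∃ y : X, dist y x₀ = r ∧ u y = u x₀ + L * r := by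
  intro r hr
  have hr0 : 0 < r := hr.1
  obtain ⟨y, hy, hy_cone⟩ := exists_mem_sphere_forall_le_cone
    (Real.lipschitzWith_toNNReal_of_abs_sub_le hlip).continuous hr0.ne' (hsph r hr)
  have hyr : dist y x₀ = r := mem_sphere.mp hy
  have hL_le : L ≤ (u y - u x₀) / r :=
    le_of_tendsto_slope_of_forall_le_cone hr0
      (hcone r hr _ _ (fun z hz => hy_cone z (mem_sphere.mpr hz)) le_rfl) hxne hx hstretch
  have hle_L : (u y - u x₀) / r ≤ L := by
    rw [div_le_iff₀ hr0, ← hyr]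
    exact (le_abs_self _).trans (hlip y x₀)
  refine ⟨y, hyr, ?_⟩
  have hslope : (u y - u x₀) / r = L := le_antisymm hle_L hL_le
  rw [div_eq_iff hr0.ne'] at hslope
  linarith

/-- Proposition 5.9 of the paper, `+L` case: in a proper metric
space, if `u` is `L`-Lipschitz, satisfies comparison with cones from above on
`B(x₀,R)`, all spheres `S(x₀,r)` for `0 < r ≤ R` are nonempty, and the
Lipschitz constant `L` is attained infinitesimally at `x₀` along a sequence
`x_i → x₀`, then for every `r ∈ (0,R]` there is a point `x` with
`dist x x₀ = r` and `u x = u x₀ + L·r`. -/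
theorem exists_cone_point_of_infinitesimal_stretch {X : Type*} [MetricSpace X]
    [ProperSpace X] (x₀ : X) (R L : ℝ) (hR : 0 < R) (hL : 0 < L) (u : X → ℝ)
    (hlip : ∀ x y : X, |u x - u y| ≤ L * dist x y)
    (hsph : ∀ r ∈ Ioc (0 : ℝ) R, (sphere x₀ r).Nonempty)
    (hcone : ∀ r ∈ Ioc (0 : ℝ) R, ∀ A B : ℝ,
      (∀ x, dist x x₀ = r → u x ≤ A + B * dist x x₀) → u x₀ ≤ A →
        ∀ x, dist x x₀ ≤ r → u x ≤ A + B * dist x x₀)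
    (x : ℕ → X) (hxne : ∀ i, x i ≠ x₀) (hx : Tendsto x atTop (nhds x₀))
    (hstretch : Tendsto (fun i => (u (x i) - u x₀) / dist (x i) x₀) atTop
      (nhds L)) :
    ∀ r ∈ Ioc (0 : ℝ) R, ∃ y : X, dist y x₀ = r ∧ u y = u x₀ + L * r :=
  exists_cone_point_of_infinitesimal_stretch_general x₀ R L u hlip hsph hcone x hxne hx hstretch
end

section
/- Let n ≥ 1, let f : ℝⁿ → ℝ be a Lipschitz function, and let U ⊆ ℝⁿ be a nonempty open set. Then (with Df defined almost everywhere by Rademacher's theorem) the essential supremum over U, with respect to Lebesgue measure, of x ↦ ‖Df(x)‖ equals sup_{x ∈ U} L_f(x); moreover, for each x ∈ U, L_f(x) = lim_{r → 0} ess sup_{B(x,r)} ‖Df‖. -/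
/-!
At every point `‖Df(x)‖` is at most the Lipschitz constant of `f` on any neighbourhood of `x`, so
the essential supremum of `‖Df‖` on a ball is at most the Lipschitz constant on that ball.
Conversely, suppose `‖Df‖ ≤ m` almost everywhere on `B(x, r)` and let `a, b ∈ B(x, r')`, `r' < r`.
Average `f` over the translates of a small ball `B(0, ε)`: by Rademacher's theorem and translation
invariance of Haar measure, for each point of the segment from `a` to `b` almost every translate
is a point of differentiability with `‖Df‖ ≤ m`, so the average has derivative at most `m ‖b - a‖`
along the segment, while at the endpoints it is within `K ε` of `f` (`K` a Lipschitz constant of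
`f`). Letting `ε → 0` gives `L_f(B(x, r')) ≤ ess sup_{B(x, r)} ‖Df‖`. Hence the essential supremum
on `B(x, r)`, which is monotone in `r`, decreases to `L_f(x)` as `r → 0`, and the identity on `U`
follows by covering `U` with balls.
-/

open Metric MeasureTheory Filter

noncomputable def locLipConst {X Y : Type*} [MetricSpace X] [MetricSpace Y]
    (f : X → Y) (x : X) : ENNReal :=
  ⨅ (r : ℝ) (_ : 0 < r), lipConstOn f (ball x r)

open Set ProbabilityTheory
open scoped NNReal ENNReal Topology

section LipConst

variable {X Y : Type*} [MetricSpace X] [MetricSpace Y] {f : X → Y} {s : Set X}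

theorem lipConstOn_le_of_lipschitzOnWith_s15 {L : ℝ≥0} (h : LipschitzOnWith L f s) :
    lipConstOn f s ≤ L :=
  sInf_le fun _ hx _ hy => h hx hy

theorem lipschitzOnWith_lipConstOn (h : lipConstOn f s ≠ ⊤) :
    LipschitzOnWith (lipConstOn f s).toNNReal f s := by
  intro a ha b hb
  rw [ENNReal.coe_toNNReal h]
  rcases eq_or_ne a b with rfl | hab
  · simp
  have hquot : edist (f a) (f b) / edist a b ≤ lipConstOn f s :=
    le_sInf fun L hL => ENNReal.div_le_of_le_mul (hL a ha b hb)
  rwa [ENNReal.div_le_iff_le_mul (.inl (edist_pos.2 hab).ne') (.inl (edist_ne_top a b))]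
    at hquot

end LipConst

section Derivative

variable {E F : Type*} [NormedAddCommGroup E] [NormedSpace ℝ E]
  [NormedAddCommGroup F] [NormedSpace ℝ F] {f : E → F}

theorem nnnorm_fderiv_le_lipConstOn {s : Set E} {x : E} (hs : s ∈ 𝓝 x) :
    (‖fderiv ℝ f x‖₊ : ℝ≥0∞) ≤ lipConstOn f s := by
  by_cases htop : lipConstOn f s = ⊤
  · simp [htop]
  rw [← ENNReal.coe_toNNReal htop, ENNReal.coe_le_coe, ← NNReal.coe_le_coe, coe_nnnorm]
  exact norm_fderiv_le_of_lipschitzOn ℝ hs (lipschitzOnWith_lipConstOn htop)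

theorem nnnorm_fderiv_le_locLipConst (f : E → F) (x : E) :
    (‖fderiv ℝ f x‖₊ : ℝ≥0∞) ≤ locLipConst f x :=
  le_iInf₂ fun _ hr => nnnorm_fderiv_le_lipConstOn (ball_mem_nhds x hr)

theorem essSup_nnnorm_fderiv_le_lipConstOn [MeasurableSpace E] [OpensMeasurableSpace E]
    (μ : Measure E) {U : Set E} (hU : IsOpen U) :
    essSup (fun y => (‖fderiv ℝ f y‖₊ : ℝ≥0∞)) (μ.restrict U) ≤ lipConstOn f U := by
  refine essSup_le_of_ae_le _ ?_
  filter_upwards [ae_restrict_mem hU.measurableSet] with y hy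
  exact nnnorm_fderiv_le_lipConstOn (hU.mem_nhds hy)

end Derivative

section Averaging

variable {E F : Type*} [NormedAddCommGroup E] [MeasurableSpace E] [OpensMeasurableSpace E]
  [NormedAddCommGroup F] [NormedSpace ℝ F] [FiniteDimensional ℝ F]
  {f : E → F} {K : ℝ≥0} {ν : Measure E} [IsProbabilityMeasure ν] {ε : ℝ}

theorem LipschitzWith.integrable_comp_add (hf : LipschitzWith K f) (hν : ∀ᵐ y ∂ν, ‖y‖ ≤ ε)
    (c : E) : Integrable (fun y => f (c + y)) ν := by
  refine Integrable.of_bound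
    (hf.continuous.comp (continuous_const.add continuous_id)).aestronglyMeasurable
    (‖f c‖ + K * ε) ?_
  filter_upwards [hν] with y hy
  calc ‖f (c + y)‖ ≤ ‖f c‖ + ‖f (c + y) - f c‖ := norm_le_insert' _ _
    _ ≤ ‖f c‖ + K * ‖y‖ := by
        gcongr
        simpa [dist_eq_norm] using hf.dist_le_mul (c + y) c
    _ ≤ ‖f c‖ + K * ε := by gcongr

theorem LipschitzWith.norm_integral_comp_add_sub_le (hf : LipschitzWith K f)
    (hν : ∀ᵐ y ∂ν, ‖y‖ ≤ ε) (c : E) : ‖∫ y, f (c + y) ∂ν - f c‖ ≤ K * ε := by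
  have hint := hf.integrable_comp_add hν c
  calc ‖∫ y, f (c + y) ∂ν - f c‖ = ‖∫ y, (f (c + y) - f c) ∂ν‖ := by
        rw [integral_sub hint (integrable_const _), integral_const, probReal_univ, one_smul]
    _ ≤ K * ε * ν.real univ := by
        refine norm_integral_le_of_norm_le_const ?_
        filter_upwards [hν] with y hy
        calc ‖f (c + y) - f c‖ ≤ K * ‖y‖ := by
              simpa [dist_eq_norm] using hf.dist_le_mul (c + y) c
          _ ≤ K * ε := by gcongr
    _ = K * ε := by rw [probReal_univ, mul_one]

end Averaging

section AveragedMeanValue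

variable {E F : Type*} [NormedAddCommGroup E] [NormedSpace ℝ E] [MeasurableSpace E]
  [BorelSpace E] [NormedAddCommGroup F] [NormedSpace ℝ F] [FiniteDimensional ℝ F]
  {f : E → F} {K : ℝ≥0} {ν : Measure E} [IsProbabilityMeasure ν] {ε : ℝ}

theorem LipschitzWith.hasDerivAt_integral_comp_add_smul (hf : LipschitzWith K f)
    (hν : ∀ᵐ y ∂ν, ‖y‖ ≤ ε) (c v : E) {t : ℝ}
    (hdiff : ∀ᵐ y ∂ν, DifferentiableAt ℝ f (c + t • v + y)) :
    HasDerivAt (fun s : ℝ => ∫ y, f (c + s • v + y) ∂ν)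
      (∫ y, fderiv ℝ f (c + t • v + y) v ∂ν) t := by
  borelize F
  have hlip : ∀ y,
      LipschitzOnWith (Real.nnabs (K * ‖v‖)) (fun s : ℝ => f (c + s • v + y)) univ := by
    intro y
    have hline : LipschitzWith ‖v‖₊ fun s : ℝ => c + s • v + y := by
      refine LipschitzWith.of_dist_le_mul fun s u => ?_
      simp [dist_eq_norm, ← sub_smul, norm_smul, mul_comm]
    have hK : Real.nnabs (K * ‖v‖) = K * ‖v‖₊ := by ext; simp
    rw [hK]
    exact (hf.comp hline).lipschitzOnWith
  have hmeas : ∀ s : ℝ, AEStronglyMeasurable (fun y => f (c + s • v + y)) ν := fun s =>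
    (hf.continuous.comp (continuous_const.add continuous_id)).aestronglyMeasurable
  refine (hasDerivAt_integral_of_dominated_loc_of_lip univ_mem (.of_forall hmeas)
    (hf.integrable_comp_add hν _)
    ((measurable_fderiv_apply_const ℝ f v).comp
      (continuous_const.add continuous_id).measurable).aestronglyMeasurable
    (.of_forall hlip) (integrable_const _) ?_).2
  filter_upwards [hdiff] with y hy
  have hpath : HasDerivAt (fun s : ℝ => c + s • v + y) v t := by
    simpa using (((hasDerivAt_id t).smul_const v).const_add c).add_const y
  exact hy.hasFDerivAt.comp_hasDerivAt t hpath

theorem LipschitzWith.norm_integral_comp_add_sub_integral_comp_add_le (hf : LipschitzWith K f)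
    (hν : ∀ᵐ y ∂ν, ‖y‖ ≤ ε) (a b : E) {m : ℝ}
    (hm : ∀ t ∈ Icc (0 : ℝ) 1, ∀ᵐ y ∂ν, DifferentiableAt ℝ f (a + t • (b - a) + y) ∧
      ‖fderiv ℝ f (a + t • (b - a) + y)‖ ≤ m) :
    ‖∫ y, f (b + y) ∂ν - ∫ y, f (a + y) ∂ν‖ ≤ m * ‖b - a‖ := by
  have hderiv : ∀ t ∈ Icc (0 : ℝ) 1,
      HasDerivAt (fun s : ℝ => ∫ y, f (a + s • (b - a) + y) ∂ν)
        (∫ y, fderiv ℝ f (a + t • (b - a) + y) (b - a) ∂ν) t := fun t ht =>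
    hf.hasDerivAt_integral_comp_add_smul hν a (b - a) ((hm t ht).mono fun _ hy => hy.1)
  have hbound : ∀ t ∈ Icc (0 : ℝ) 1, ‖∫ y, fderiv ℝ f (a + t • (b - a) + y) (b - a) ∂ν‖ ≤
      m * ‖b - a‖ := by
    intro t ht
    have hle : ∀ᵐ y ∂ν, ‖fderiv ℝ f (a + t • (b - a) + y) (b - a)‖ ≤ m * ‖b - a‖ :=
      (hm t ht).mono fun y hy => (ContinuousLinearMap.le_opNorm _ _).trans
        (mul_le_mul_of_nonneg_right hy.2 (norm_nonneg _))
    simpa using norm_integral_le_of_norm_le_const hle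
  simpa using norm_image_sub_le_of_norm_deriv_le_segment_01'
    (fun t ht => (hderiv t ht).hasDerivWithinAt)
    (fun t ht => hbound t (Ico_subset_Icc_self ht))

end AveragedMeanValue

section AddHaar

variable {E F : Type*} [NormedAddCommGroup E] [NormedSpace ℝ E] [FiniteDimensional ℝ E]
  [MeasurableSpace E] [BorelSpace E] [NormedAddCommGroup F] [NormedSpace ℝ F]
  [FiniteDimensional ℝ F] (μ : Measure E) [μ.IsAddHaarMeasure] {f : E → F} {K : ℝ≥0}

theorem LipschitzWith.dist_le_of_ae_nnnorm_fderiv_le_add (hf : LipschitzWith K f) {s : Set E}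
    (hs : Convex ℝ s) {ε : ℝ} (hε : 0 < ε) {m : ℝ≥0}
    (hm : ∀ᵐ x ∂μ, x ∈ thickening ε s → ‖fderiv ℝ f x‖₊ ≤ m) {a b : E} (ha : a ∈ s)
    (hb : b ∈ s) : dist (f a) (f b) ≤ m * dist a b + 2 * K * ε := by
  set ν := μ[|ball 0 ε]
  have : IsProbabilityMeasure ν :=
    cond_isProbabilityMeasure_of_finite (measure_ball_pos μ 0 hε).ne' measure_ball_lt_top.ne
  have hball : ∀ᵐ y ∂ν, y ∈ ball (0 : E) ε := ae_cond_mem measurableSet_ball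
  have hν : ∀ᵐ y ∂ν, ‖y‖ ≤ ε := hball.mono fun y hy => (mem_ball_zero_iff.1 hy).le
  have hderiv : ∀ t ∈ Icc (0 : ℝ) 1, ∀ᵐ y ∂ν, DifferentiableAt ℝ f (a + t • (b - a) + y) ∧
      ‖fderiv ℝ f (a + t • (b - a) + y)‖ ≤ m := by
    intro t ht
    have htrans := (measurePreserving_add_left μ (a + t • (b - a))).quasiMeasurePreserving
    filter_upwards [hball, cond_absolutelyContinuous.ae_le (htrans.ae hf.ae_differentiableAt),
      cond_absolutelyContinuous.ae_le (htrans.ae hm)] with y hy hdiff hbound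
    refine ⟨hdiff, ?_⟩
    have hmem : a + t • (b - a) + y ∈ thickening ε s :=
      mem_thickening_iff.2 ⟨_, hs.add_smul_sub_mem ha hb ht, by simpa using hy⟩
    exact_mod_cast hbound hmem
  calc dist (f a) (f b) = dist (f b) (f a) := dist_comm _ _
    _ ≤ dist (f b) (∫ y, f (b + y) ∂ν) + dist (∫ y, f (b + y) ∂ν) (∫ y, f (a + y) ∂ν) +
        dist (∫ y, f (a + y) ∂ν) (f a) := dist_triangle4 _ _ _ _
    _ ≤ K * ε + m * dist a b + K * ε := by
      rw [dist_comm (f b), dist_eq_norm, dist_eq_norm, dist_eq_norm, dist_comm a b, dist_eq_norm]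
      gcongr
      · exact hf.norm_integral_comp_add_sub_le hν b
      · exact hf.norm_integral_comp_add_sub_integral_comp_add_le hν a b hderiv
      · exact hf.norm_integral_comp_add_sub_le hν a
    _ = m * dist a b + 2 * K * ε := by ring

theorem LipschitzWith.lipschitzOnWith_of_ae_nnnorm_fderiv_le (hf : LipschitzWith K f)
    {s : Set E} (hs : Convex ℝ s) {δ : ℝ} (hδ : 0 < δ) {m : ℝ≥0}
    (hm : ∀ᵐ x ∂μ, x ∈ thickening δ s → ‖fderiv ℝ f x‖₊ ≤ m) : LipschitzOnWith m f s := by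
  refine LipschitzOnWith.of_dist_le_mul fun a ha b hb => ?_
  have hlim : Tendsto (fun ε => m * dist a b + 2 * K * ε) (𝓝[>] 0) (𝓝 (m * dist a b)) := by
    have : Continuous fun ε : ℝ => m * dist a b + 2 * K * ε := by fun_prop
    simpa using this.continuousWithinAt.tendsto (x := 0) (s := Ioi 0)
  refine ge_of_tendsto hlim ?_
  filter_upwards [Ioo_mem_nhdsGT hδ] with ε hε
  refine hf.dist_le_of_ae_nnnorm_fderiv_le_add μ hs hε.1 ?_ ha hb
  filter_upwards [hm] with x hx hxε using hx (thickening_mono hε.2.le s hxε)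

theorem LipschitzWith.lipConstOn_ball_le_essSup (hf : LipschitzWith K f) (x : E) {r' r : ℝ}
    (hr : r' < r) :
    lipConstOn f (ball x r') ≤
      essSup (fun y => (‖fderiv ℝ f y‖₊ : ℝ≥0∞)) (μ.restrict (ball x r)) := by
  set M := essSup (fun y => (‖fderiv ℝ f y‖₊ : ℝ≥0∞)) (μ.restrict (ball x r))
  rcases eq_or_ne M ⊤ with hM | hM
  · simp [hM]
  have hm : ∀ᵐ y ∂μ, y ∈ thickening (r - r') (ball x r') → ‖fderiv ℝ f y‖₊ ≤ M.toNNReal := by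
    have hle : ∀ᵐ y ∂μ.restrict (ball x r), (‖fderiv ℝ f y‖₊ : ℝ≥0∞) ≤ M :=
      ENNReal.ae_le_essSup _
    rw [ae_restrict_iff' measurableSet_ball] at hle
    filter_upwards [hle] with y hy hyt
    have hyr : y ∈ ball x r := by simpa using thickening_ball x (r - r') r' hyt
    rw [← ENNReal.coe_le_coe, ENNReal.coe_toNNReal hM]
    exact hy hyr
  calc lipConstOn f (ball x r') ≤ M.toNNReal := lipConstOn_le_of_lipschitzOnWith_s15
        (hf.lipschitzOnWith_of_ae_nnnorm_fderiv_le μ (convex_ball x r') (sub_pos.2 hr) hm)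
    _ = M := ENNReal.coe_toNNReal hM

theorem LipschitzWith.locLipConst_le_essSup (hf : LipschitzWith K f) (x : E) {r : ℝ}
    (hr : 0 < r) :
    locLipConst f x ≤ essSup (fun y => (‖fderiv ℝ f y‖₊ : ℝ≥0∞)) (μ.restrict (ball x r)) :=
  (iInf₂_le (r / 2) (half_pos hr)).trans (hf.lipConstOn_ball_le_essSup μ x (half_lt_self hr))

theorem LipschitzWith.locLipConst_eq_iInf_essSup (hf : LipschitzWith K f) (x : E) :
    locLipConst f x =
      ⨅ r > 0, essSup (fun y => (‖fderiv ℝ f y‖₊ : ℝ≥0∞)) (μ.restrict (ball x r)) :=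
  le_antisymm (le_iInf₂ fun _ hr => hf.locLipConst_le_essSup μ x hr)
    (le_iInf₂ fun r hr => iInf₂_le_of_le r hr (essSup_nnnorm_fderiv_le_lipConstOn μ isOpen_ball))

theorem LipschitzWith.tendsto_essSup_ball_locLipConst (hf : LipschitzWith K f) (x : E) :
    Tendsto (fun r => essSup (fun y => (‖fderiv ℝ f y‖₊ : ℝ≥0∞)) (μ.restrict (ball x r)))
      (𝓝[>] 0) (𝓝 (locLipConst f x)) := by
  have hmono : Monotone fun r =>
      essSup (fun y => (‖fderiv ℝ f y‖₊ : ℝ≥0∞)) (μ.restrict (ball x r)) := fun r s hrs =>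
    essSup_mono_measure (Measure.absolutelyContinuous_of_le
      (Measure.restrict_mono (ball_subset_ball hrs) le_rfl))
  simpa [sInf_image, ← hf.locLipConst_eq_iInf_essSup μ] using hmono.tendsto_nhdsGT 0

theorem LipschitzWith.essSup_restrict_eq_iSup_locLipConst (hf : LipschitzWith K f) {U : Set E}
    (hU : IsOpen U) :
    essSup (fun y => (‖fderiv ℝ f y‖₊ : ℝ≥0∞)) (μ.restrict U) = ⨆ x ∈ U, locLipConst f x := by
  refine le_antisymm (essSup_le_of_ae_le _ ?_) (iSup₂_le fun x hx => ?_)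
  · filter_upwards [ae_restrict_mem hU.measurableSet] with y hy
    exact (nnnorm_fderiv_le_locLipConst f y).trans (le_biSup _ hy)
  · obtain ⟨r, hr, hsub⟩ := isOpen_iff.1 hU x hx
    exact (hf.locLipConst_le_essSup μ x hr).trans <| essSup_mono_measure <|
      Measure.absolutelyContinuous_of_le (Measure.restrict_mono hsub le_rfl)

end AddHaar

theorem essSup_fderiv_eq_iSup_locLipConst_general (n : ℕ)
    (f : EuclideanSpace ℝ (Fin n) → ℝ) (hf : ∃ K : NNReal, LipschitzWith K f)
    (U : Set (EuclideanSpace ℝ (Fin n))) (hU : IsOpen U) :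
    (essSup (fun x => (‖fderiv ℝ f x‖₊ : ENNReal)) (volume.restrict U) =
        ⨆ x ∈ U, locLipConst f x) ∧
      ∀ x ∈ U,
        Tendsto
          (fun r : ℝ =>
            essSup (fun y => (‖fderiv ℝ f y‖₊ : ENNReal))
              (volume.restrict (ball x r)))
          (nhdsWithin 0 (Set.Ioi 0)) (nhds (locLipConst f x)) := by
  obtain ⟨K, hK⟩ := hf
  exact ⟨hK.essSup_restrict_eq_iSup_locLipConst volume hU,
    fun x _ => hK.tendsto_essSup_ball_locLipConst volume x⟩

/-- Proposition 2.3 (ii) of the paper: for a Lipschitz function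
`f : ℝⁿ → ℝ` and a nonempty open set `U`, the essential supremum over `U`
(w.r.t. Lebesgue measure) of the operator norm of the (a.e. defined) derivative
`Df` equals `sup_{x ∈ U} L_f(x)`, and for each `x ∈ U`,
`L_f(x) = lim_{r → 0} ess sup_{B(x,r)} ‖Df‖`. -/
theorem essSup_fderiv_eq_iSup_locLipConst (n : ℕ) (hn : 1 ≤ n)
    (f : EuclideanSpace ℝ (Fin n) → ℝ) (hf : ∃ K : NNReal, LipschitzWith K f)
    (U : Set (EuclideanSpace ℝ (Fin n))) (hU : IsOpen U) (hUne : U.Nonempty) :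
    (essSup (fun x => (‖fderiv ℝ f x‖₊ : ENNReal)) (volume.restrict U) =
        ⨆ x ∈ U, locLipConst f x) ∧
      ∀ x ∈ U,
        Tendsto
          (fun r : ℝ =>
            essSup (fun y => (‖fderiv ℝ f y‖₊ : ENNReal))
              (volume.restrict (ball x r)))
          (nhdsWithin 0 (Set.Ioi 0)) (nhds (locLipConst f x)) :=
  essSup_fderiv_eq_iSup_locLipConst_general n f hf U hU
end
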